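/- arXiv:2301.05939 — 3 statements merged into one kernel-verified Lean document; each statement's English description precedes it below -/
import Mathlib

section
/- Let T be a star-like tree: let v₀ have neighbors v₁,...,v_n, where each v_k has degree d_k ≥ 1 in T and each v_k is adjacent to d_k − 1 pendant leaves besides v₀. Let ψ(z) = det(−zD+A) for T and ψ̂(z) = ∏_{k=1}^n (−1)^{d_k}·z^{d_k−2}·(d_k z² − (d_k − 1)). Then ψ(z)/ψ̂(z) = −n·z + Σ_{k=1}^{n} 1/( d_k·z − (d_k − 1)/z ) as an identity of rational functions; equivalently ψ(z)/ψ̂(z) + n·z = z·Σ_{k=1}^n ∏_{s≠k}(d_s z² − d_s + 1) / ∏_{k=1}^n (d_k z² − d_k + 1). -/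
open Matrix Finset

/-- Vertex set of a snowflake tree: the root, the `n` neighbors of the root,
and `d k - 1` pendant leaves attached to the `k`-th neighbor. -/
abbrev SnowV (n : ℕ) (d : Fin n → ℕ) : Type :=
  Unit ⊕ (Fin n ⊕ (Σ k : Fin n, Fin (d k - 1)))

/-- Adjacency matrix of the snowflake tree. -/
def snowA (n : ℕ) (d : Fin n → ℕ) : Matrix (SnowV n d) (SnowV n d) ℝ :=
  fun u v =>
    match u, v with
    | Sum.inl _, Sum.inr (Sum.inl _) => 1
    | Sum.inr (Sum.inl _), Sum.inl _ => 1
    | Sum.inr (Sum.inl k), Sum.inr (Sum.inr ⟨k', _⟩) => if k = k' then 1 else 0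
    | Sum.inr (Sum.inr ⟨k', _⟩), Sum.inr (Sum.inl k) => if k = k' then 1 else 0
    | _, _ => 0

/-- Degrees of the vertices of the snowflake tree. -/
def snowDeg (n : ℕ) (d : Fin n → ℕ) : SnowV n d → ℝ :=
  fun v =>
    match v with
    | Sum.inl _ => n
    | Sum.inr (Sum.inl k) => d k
    | Sum.inr (Sum.inr _) => 1

noncomputable def snowBmat (n : ℕ) (d : Fin n → ℕ) (z : ℝ) :
    Matrix (Fin n ⊕ (Σ k : Fin n, Fin (d k - 1))) (Fin n ⊕ (Σ k : Fin n, Fin (d k - 1))) ℝ :=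
  fun u v =>
    match u, v with
    | Sum.inl k, Sum.inl k' => if k = k' then -(z * (d k : ℝ)) else 0
    | Sum.inl k, Sum.inr b => if k = b.1 then 1 else 0
    | Sum.inr a, Sum.inl k' => if k' = a.1 then 1 else 0
    | Sum.inr a, Sum.inr b => if a = b then -z else 0

noncomputable def snowBinv (n : ℕ) (d : Fin n → ℕ) (z : ℝ) :
    Matrix (Fin n ⊕ (Σ k : Fin n, Fin (d k - 1))) (Fin n ⊕ (Σ k : Fin n, Fin (d k - 1))) ℝ :=
  fun u v =>
    match u, v with
    | Sum.inl k, Sum.inl k' => if k = k' then -1 / ((d k : ℝ) * z - ((d k : ℝ) - 1) / z) else 0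
    | Sum.inl k, Sum.inr b => if k = b.1 then -1 / (z * ((d k : ℝ) * z - ((d k : ℝ) - 1) / z)) else 0
    | Sum.inr a, Sum.inl k' => if a.1 = k' then -1 / (z * ((d a.1 : ℝ) * z - ((d a.1 : ℝ) - 1) / z)) else 0
    | Sum.inr a, Sum.inr b =>
        (if a = b then -1 / z else 0) +
        (if a.1 = b.1 then -1 / (z ^ 2 * ((d a.1 : ℝ) * z - ((d a.1 : ℝ) - 1) / z)) else 0)

lemma snow_mul_inv (n : ℕ) (d : Fin n → ℕ) (hd : ∀ k, 1 ≤ d k) (z : ℝ) (hz : z ≠ 0)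
    (hk : ∀ k, (d k : ℝ) * z - ((d k : ℝ) - 1) / z ≠ 0) :
    snowBmat n d z * snowBinv n d z = 1 := by
  have h1 : ∀ k, (d k : ℝ) * z * z - ((d k : ℝ) - 1) ≠ 0 := by
    intro k h
    apply hk k
    have h2 : (d k : ℝ) - 1 = (d k : ℝ) * z ^ 2 := by linear_combination -h
    rw [h2, sub_eq_zero]
    field_simp
  ext u w
  rw [Matrix.mul_apply, Fintype.sum_sum_type]
  cases u with
  | inl k =>
    rw [← Finset.univ_sigma_univ, Finset.sum_sigma]
    cases w with
    | inl k' =>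
      by_cases h : k = k'
      · subst h
        simp only [snowBmat, snowBinv, ite_mul, mul_ite, zero_mul, mul_zero, one_mul,
          Finset.sum_ite_irrel, Finset.sum_ite_eq, Finset.sum_ite_eq', Finset.mem_univ, if_true,
          Finset.sum_const, Finset.card_univ, Fintype.card_fin, nsmul_eq_mul,
          Matrix.one_apply_eq]
        rw [Nat.cast_sub (hd k), Nat.cast_one]
        have := h1 k
        have h' : 1 + z ^ 2 * (d k : ℝ) - (d k : ℝ) ≠ 0 := fun h0 => this (by linear_combination h0)
        field_simp
        ring_nf
        field_simp
        ring
      · simp only [snowBmat, snowBinv, ite_mul, mul_ite, zero_mul, mul_zero, one_mul,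
          Finset.sum_ite_irrel, Finset.sum_ite_eq, Finset.sum_ite_eq', Finset.mem_univ, if_true,
          Finset.sum_const, Finset.card_univ, Fintype.card_fin, nsmul_eq_mul, h, if_false,
          Finset.sum_const_zero, Matrix.one_apply_ne, Ne, Sum.inl.injEq, not_false_iff]
        norm_num
    | inr b =>
      obtain ⟨b1, b2⟩ := b
      by_cases h : k = b1
      · subst h
        simp only [snowBmat, snowBinv, ite_mul, mul_ite, zero_mul, mul_zero, one_mul,
          Finset.sum_ite_irrel, Finset.sum_ite_eq, Finset.sum_ite_eq', Finset.mem_univ, if_true,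
          Finset.sum_const, Finset.card_univ, Fintype.card_fin, nsmul_eq_mul,
          Sigma.mk.inj_iff, heq_eq_eq, true_and, Finset.sum_add_distrib,
          Matrix.one_apply, Sum.inr.injEq, reduceCtorEq, if_false]
        rw [Nat.cast_sub (hd k), Nat.cast_one]
        have := h1 k
        have h' : 1 + z ^ 2 * (d k : ℝ) - (d k : ℝ) ≠ 0 := fun h0 => this (by linear_combination h0)
        field_simp
        ring_nf
        field_simp
        ring
      · simp only [snowBmat, snowBinv, ite_mul, mul_ite, zero_mul, mul_zero, one_mul,
          Finset.sum_ite_irrel, Finset.sum_ite_eq, Finset.sum_ite_eq', Finset.mem_univ, if_true,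
          Finset.sum_const, Finset.card_univ, Fintype.card_fin, nsmul_eq_mul, h, if_false,
          Finset.sum_add_distrib, Finset.sum_const_zero,
          Matrix.one_apply, Sum.inr.injEq, reduceCtorEq]
        norm_num
        exact Finset.sum_eq_zero fun x _ => if_neg fun heq => h (congrArg Sigma.fst heq)
  | inr a =>
    obtain ⟨a1, a2⟩ := a
    have hcol : ∀ w, (∑ x : Σ k : Fin n, Fin (d k - 1),
        snowBmat n d z (Sum.inr ⟨a1, a2⟩) (Sum.inr x) * snowBinv n d z (Sum.inr x) w)
        = -z * snowBinv n d z (Sum.inr ⟨a1, a2⟩) w := by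
      intro w
      simp only [snowBmat, ite_mul, zero_mul, Finset.sum_ite_eq, Finset.mem_univ, if_true]
    rw [hcol]
    have hrow : (∑ v : Fin n,
        snowBmat n d z (Sum.inr ⟨a1, a2⟩) (Sum.inl v) * snowBinv n d z (Sum.inl v) w)
        = snowBinv n d z (Sum.inl a1) w := by
      simp only [snowBmat, ite_mul, zero_mul, one_mul]
      rw [Finset.sum_ite_eq' Finset.univ a1 (fun v => snowBinv n d z (Sum.inl v) w)]
      simp
    rw [hrow]
    cases w with
    | inl k' =>
      simp only [snowBinv, Matrix.one_apply, Sum.inl.injEq, Sum.inr.injEq, reduceCtorEq,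
        if_false, mul_ite, mul_zero]
      by_cases h : a1 = k'
      · simp only [h, if_true, if_pos rfl]
        have := hk k'
        subst h
        field_simp
        ring
      · simp [h]
    | inr b =>
      obtain ⟨b1, b2⟩ := b
      simp only [snowBinv, Matrix.one_apply, Sum.inr.injEq, mul_add, mul_ite, mul_zero]
      by_cases h : a1 = b1
      · subst h
        simp only [if_pos rfl]
        by_cases h2 : a2 = b2
        · subst h2
          simp only [if_pos rfl]
          have := h1 a1
          field_simp
          simp only [↓reduceIte]
          ring
        · have hne : (⟨a1, a2⟩ : Σ k : Fin n, Fin (d k - 1)) ≠ ⟨a1, b2⟩ := by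
            simp [Sigma.mk.inj_iff, h2]
          simp only [if_neg hne, mul_zero]
          have := h1 a1
          field_simp
          simp only [↓reduceIte]
          ring
      · have hne : (⟨a1, a2⟩ : Σ k : Fin n, Fin (d k - 1)) ≠ ⟨b1, b2⟩ := fun heq =>
          h (congrArg Sigma.fst heq)
        simp [h, hne]

def snowRow (n : ℕ) (d : Fin n → ℕ) : (Fin n ⊕ (Σ k : Fin n, Fin (d k - 1))) → ℝ :=
  Sum.elim (fun _ => 1) (fun _ => 0)

lemma snow_blocks (n : ℕ) (d : Fin n → ℕ) (z : ℝ) :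
    -z • Matrix.diagonal (snowDeg n d) + snowA n d =
      Matrix.fromBlocks (Matrix.of fun _ _ : Unit => -z * (n : ℝ))
        (Matrix.of fun _ x => snowRow n d x)
        (Matrix.of fun x _ => snowRow n d x) (snowBmat n d z) := by
  ext i j
  cases i with
  | inl u =>
    cases j with
    | inl u' => simp [snowA, snowDeg, Matrix.diagonal_apply, snowRow]
    | inr x =>
      cases x with
      | inl k => simp [snowA, snowDeg, Matrix.diagonal_apply, snowRow]
      | inr a => obtain ⟨a1, a2⟩ := a; simp [snowA, snowDeg, Matrix.diagonal_apply, snowRow]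
  | inr x =>
    cases x with
    | inl k =>
      cases j with
      | inl u' => simp [snowA, snowDeg, Matrix.diagonal_apply, snowRow]
      | inr y =>
        cases y with
        | inl k' =>
          simp only [snowA, snowDeg, Matrix.diagonal_apply, snowBmat, Matrix.add_apply,
            Matrix.smul_apply, smul_eq_mul, Matrix.fromBlocks_apply₂₂, Matrix.of_apply,
            Sum.inr.injEq, Sum.inl.injEq]
          split_ifs <;> simp
        | inr b => obtain ⟨b1, b2⟩ := b; simp [snowA, snowDeg, Matrix.diagonal_apply, snowBmat]
    | inr a =>
      obtain ⟨a1, a2⟩ := a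
      cases j with
      | inl u' => simp [snowA, snowDeg, Matrix.diagonal_apply, snowRow]
      | inr y =>
        cases y with
        | inl k' => simp [snowA, snowDeg, Matrix.diagonal_apply, snowBmat]
        | inr b =>
          obtain ⟨b1, b2⟩ := b
          simp only [snowA, snowDeg, Matrix.diagonal_apply, snowBmat, Matrix.add_apply,
            Matrix.smul_apply, smul_eq_mul, Matrix.fromBlocks_apply₂₂, Matrix.of_apply,
            Sum.inr.injEq]
          split_ifs <;> simp_all

theorem snowflake_characteristic_ratio (n : ℕ) (hn : 1 ≤ n) (d : Fin n → ℕ)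
    (hd : ∀ k, 1 ≤ d k) (z : ℝ) (hz : z ≠ 0)
    (hk : ∀ k, (d k : ℝ) * z - ((d k : ℝ) - 1) / z ≠ 0)
    (hhat : ((-z • Matrix.diagonal (snowDeg n d) + snowA n d).submatrix
        Sum.inr Sum.inr).det ≠ 0) :
    ((-z • Matrix.diagonal (snowDeg n d) + snowA n d).det /
        ((-z • Matrix.diagonal (snowDeg n d) + snowA n d).submatrix Sum.inr Sum.inr).det =
      -(n : ℝ) * z + ∑ k : Fin n, 1 / ((d k : ℝ) * z - ((d k : ℝ) - 1) / z)) ∧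
    ((-z • Matrix.diagonal (snowDeg n d) + snowA n d).det /
        ((-z • Matrix.diagonal (snowDeg n d) + snowA n d).submatrix Sum.inr Sum.inr).det
        + (n : ℝ) * z =
      z * (∑ k : Fin n, ∏ s ∈ Finset.univ.erase k, ((d s : ℝ) * z ^ 2 - (d s : ℝ) + 1)) /
        ∏ k : Fin n, ((d k : ℝ) * z ^ 2 - (d k : ℝ) + 1)) := by
  have hmul := snow_mul_inv n d hd z hz hk
  haveI : Invertible (snowBmat n d z) := invertibleOfRightInverse _ _ hmul
  have hiv : ⅟(snowBmat n d z) = snowBinv n d z := invOf_eq_right_inv hmul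
  have hBsub : (-z • Matrix.diagonal (snowDeg n d) + snowA n d).submatrix Sum.inr Sum.inr
      = snowBmat n d z := by
    rw [snow_blocks n d z]
    rfl
  have hdet : (-z • Matrix.diagonal (snowDeg n d) + snowA n d).det
      = (snowBmat n d z).det *
        (-(n : ℝ) * z + ∑ k : Fin n, 1 / ((d k : ℝ) * z - ((d k : ℝ) - 1) / z)) := by
    rw [snow_blocks n d z, Matrix.det_fromBlocks₂₂]
    congr 1
    rw [Matrix.det_unique, hiv]
    simp only [Matrix.sub_apply, Matrix.mul_apply, Matrix.of_apply, snowRow, snowBinv,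
      Fintype.sum_sum_type, Sum.elim_inl, Sum.elim_inr, mul_zero, mul_one, one_mul, zero_mul,
      Finset.sum_const_zero, add_zero, Finset.sum_ite_eq, Finset.sum_ite_eq',
      Finset.mem_univ, if_true]
    simp only [neg_div, Finset.sum_neg_distrib]
    ring
  rw [hBsub] at hhat ⊢
  rw [hdet]
  rw [mul_div_cancel_left₀ _ hhat]
  refine ⟨rfl, ?_⟩
  have hD : ∀ k, (d k : ℝ) * z ^ 2 - (d k : ℝ) + 1 ≠ 0 := by
    intro k h
    apply hk k
    have h2 : (d k : ℝ) * z - ((d k : ℝ) - 1) / z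
        = ((d k : ℝ) * z ^ 2 - (d k : ℝ) + 1) / z := by
      field_simp
      ring
    rw [h2, h, zero_div]
  have hSD : ∀ k : Fin n, 1 / ((d k : ℝ) * z - ((d k : ℝ) - 1) / z)
      = z / ((d k : ℝ) * z ^ 2 - (d k : ℝ) + 1) := by
    intro k
    rw [div_eq_div_iff (hk k) (hD k)]
    field_simp
    ring
  have hprod : (∏ k : Fin n, ((d k : ℝ) * z ^ 2 - (d k : ℝ) + 1)) ≠ 0 :=
    Finset.prod_ne_zero_iff.2 fun k _ => hD k
  rw [show -(n : ℝ) * z + (∑ k : Fin n, 1 / ((d k : ℝ) * z - ((d k : ℝ) - 1) / z)) + (n : ℝ) * z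
      = ∑ k : Fin n, 1 / ((d k : ℝ) * z - ((d k : ℝ) - 1) / z) by ring]
  rw [eq_div_iff hprod, Finset.sum_mul]
  rw [Finset.sum_congr rfl (fun k _ => ?term)]
  · rw [← Finset.mul_sum]
  case term =>
    rw [hSD k, ← Finset.mul_prod_erase Finset.univ _ (Finset.mem_univ k)]
    rw [div_mul_eq_mul_div, div_eq_iff (hD k)]
    ring
end

section
/- Let d₁,...,d_n and e₁,...,e_n be positive integers (each ≥ 1). If the polynomials ∏_{k=1}^n (d_k z² − d_k + 1) and ∏_{k=1}^n (e_k z² − e_k + 1) are equal in ℤ[z], then the multisets {d₁,...,d_n} and {e₁,...,e_n} are equal. -/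
open Polynomial Finset

/-- Inverse of `m ↦ (m-1)/m` on positive naturals. -/
noncomputable def qpd_inv (x : ℝ) : ℕ := ⌊(1 / (1 - x) : ℝ)⌋₊

lemma qpd_inv_eq (m : ℕ) (hm : 1 ≤ m) :
    qpd_inv (((m : ℝ) - 1) / m) = m := by
  have hm0 : (m : ℝ) ≠ 0 := by positivity
  have : (1 : ℝ) - ((m : ℝ) - 1) / m = 1 / m := by field_simp; ring
  rw [qpd_inv, this]
  rw [one_div_one_div]
  exact Nat.floor_natCast m

lemma qpd_linear_prod (n : ℕ) (d : Fin n → ℕ) (hd : ∀ k, 1 ≤ d k) :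
    (∏ k : Fin n, (C (d k : ℝ) * X - C ((d k : ℝ) - 1))) =
      C (∏ k : Fin n, (d k : ℝ)) *
        ∏ k : Fin n, (X - C (((d k : ℝ) - 1) / (d k : ℝ))) := by
  rw [map_prod, ← Finset.prod_mul_distrib]
  refine Finset.prod_congr rfl fun k _ => ?_
  have h0 : (d k : ℝ) ≠ 0 := by
    have := hd k; positivity
  rw [mul_sub, ← C_mul, mul_div_cancel₀ _ h0]

theorem quadratic_product_determines_degrees (n : ℕ) (d e : Fin n → ℕ)
    (hd : ∀ k, 1 ≤ d k) (he : ∀ k, 1 ≤ e k)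
    (h : (∏ k : Fin n, (C (d k : ℤ) * X ^ 2 - C ((d k : ℤ) - 1)) : ℤ[X]) =
         ∏ k : Fin n, (C (e k : ℤ) * X ^ 2 - C ((e k : ℤ) - 1))) :
    Multiset.map d Finset.univ.val = Multiset.map e Finset.univ.val := by
  set P : ℝ[X] := ∏ k : Fin n, (C (d k : ℝ) * X - C ((d k : ℝ) - 1)) with hPdef
  set Q : ℝ[X] := ∏ k : Fin n, (C (e k : ℝ) * X - C ((e k : ℝ) - 1)) with hQdef
  have hPQ : P = Q := by
    apply Polynomial.eq_of_infinite_eval_eq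
    apply Set.Infinite.mono (s := Set.Ici (0 : ℝ)) ?_ (Set.Ici_infinite 0)
    intro t ht
    have h' := congrArg (fun p : ℤ[X] =>
      Polynomial.eval (Real.sqrt t) (Polynomial.map (Int.castRingHom ℝ) p)) h
    simp only [Polynomial.map_prod, Polynomial.map_sub, Polynomial.map_mul,
      Polynomial.map_pow, Polynomial.map_C, Polynomial.map_X, eval_prod,
      eval_sub, eval_mul, eval_pow, eval_C, eval_X] at h'
    rw [Real.sq_sqrt ht] at h'
    simpa [hPdef, hQdef, eval_prod] using h'
  have hP := qpd_linear_prod n d hd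
  have hQ := qpd_linear_prod n e he
  rw [← hPdef] at hP
  rw [← hQdef] at hQ
  have hd0 : (∏ k : Fin n, (d k : ℝ)) ≠ 0 := by
    apply Finset.prod_ne_zero_iff.2
    intro k _
    have := hd k; positivity
  have he0 : (∏ k : Fin n, (e k : ℝ)) ≠ 0 := by
    apply Finset.prod_ne_zero_iff.2
    intro k _
    have := he k; positivity
  have rootsP : P.roots =
      Multiset.map (fun k => ((d k : ℝ) - 1) / (d k : ℝ)) Finset.univ.val := by
    rw [hP, Polynomial.roots_C_mul _ hd0, Finset.prod_eq_multiset_prod]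
    have : Multiset.map (fun k => X - C (((d k : ℝ) - 1) / (d k : ℝ))) Finset.univ.val
        = Multiset.map (fun x : ℝ => X - C x)
            (Multiset.map (fun k => ((d k : ℝ) - 1) / (d k : ℝ)) Finset.univ.val) := by
      rw [Multiset.map_map]; rfl
    rw [this]
    exact Polynomial.roots_multiset_prod_X_sub_C _
  have rootsQ : Q.roots =
      Multiset.map (fun k => ((e k : ℝ) - 1) / (e k : ℝ)) Finset.univ.val := by
    rw [hQ, Polynomial.roots_C_mul _ he0, Finset.prod_eq_multiset_prod]
    have : Multiset.map (fun k => X - C (((e k : ℝ) - 1) / (e k : ℝ))) Finset.univ.val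
        = Multiset.map (fun x : ℝ => X - C x)
            (Multiset.map (fun k => ((e k : ℝ) - 1) / (e k : ℝ)) Finset.univ.val) := by
      rw [Multiset.map_map]; rfl
    rw [this]
    exact Polynomial.roots_multiset_prod_X_sub_C _
  have hroots : Multiset.map (fun k => ((d k : ℝ) - 1) / (d k : ℝ)) Finset.univ.val =
      Multiset.map (fun k => ((e k : ℝ) - 1) / (e k : ℝ)) Finset.univ.val := by
    rw [← rootsP, ← rootsQ, hPQ]
  calc Multiset.map d Finset.univ.val
      = Multiset.map (fun k => qpd_inv (((d k : ℝ) - 1) / (d k : ℝ)))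
          Finset.univ.val :=
        Multiset.map_congr rfl fun k _ => (qpd_inv_eq _ (hd k)).symm
    _ = Multiset.map qpd_inv
          (Multiset.map (fun k => ((d k : ℝ) - 1) / (d k : ℝ)) Finset.univ.val) := by
        rw [Multiset.map_map]; rfl
    _ = Multiset.map qpd_inv
          (Multiset.map (fun k => ((e k : ℝ) - 1) / (e k : ℝ)) Finset.univ.val) := by
        rw [hroots]
    _ = Multiset.map (fun k => qpd_inv (((e k : ℝ) - 1) / (e k : ℝ)))
          Finset.univ.val := by rw [Multiset.map_map]; rfl
    _ = Multiset.map e Finset.univ.val :=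
        Multiset.map_congr rfl fun k _ => qpd_inv_eq _ (he k)
end

section
/- Suppose a snowflake tree has root degree n and root-neighbor degrees d₁,...,d_n ≥ 1, and another snowflake tree has root degree n' and neighbor degrees e₁,...,e_{n'} ≥ 1. If the two trees yield the same rational function ψ(z)/ψ̂(z) = −n z + Σ_{k=1}^n 1/(d_k z − (d_k−1)/z) = −n' z + Σ_{k=1}^{n'} 1/(e_k z − (e_k−1)/z) (as rational functions of z), then n = n' and the multisets {d₁,...,d_n} = {e₁,...,e_{n'}}. -/
open Finset Filter Topology

lemma snow_ne_eventually (c p : ℝ) : ∀ᶠ x in 𝓝[>] c, x ≠ p := by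
  rcases le_or_gt p c with hp | hp
  · filter_upwards [self_mem_nhdsWithin] with x hx
    exact fun hxp => absurd (hxp ▸ hx) (not_lt.2 hp)
  · have : Set.Iio p ∈ 𝓝[>] c := nhdsWithin_le_nhds (Iio_mem_nhds hp)
    filter_upwards [this] with x hx
    exact ne_of_lt hx

lemma snow_residue (n : ℕ) (d : Fin n → ℕ) (hd : ∀ k, 1 ≤ d k) (a : ℕ) (ha : 1 ≤ a) :
    Filter.Tendsto (fun x : ℝ => (x - ((a:ℝ)-1)/a) *
      (-(n:ℝ) + ∑ k, 1 / ((d k : ℝ) * x - ((d k : ℝ) - 1))))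
      (𝓝[>] (((a:ℝ)-1)/a))
      (𝓝 (((univ.filter (fun k => d k = a)).card : ℝ) / a)) := by
  have ha0 : (a:ℝ) ≠ 0 := Nat.cast_ne_zero.2 (by omega)
  set c : ℝ := ((a:ℝ)-1)/a with hc
  have hfun : ∀ x : ℝ, (x - c) * (-(n:ℝ)) + ∑ k, (x - c) * (1/((d k:ℝ)*x - ((d k:ℝ)-1)))
      = (x - c) * (-(n:ℝ) + ∑ k, 1/((d k:ℝ)*x - ((d k:ℝ)-1))) := by
    intro x; rw [mul_add, Finset.mul_sum]
  have hsum : (((univ.filter (fun k => d k = a)).card : ℝ) / a) =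
      0 + ∑ k : Fin n, (if d k = a then 1/(a:ℝ) else 0) := by
    rw [zero_add, ← Finset.sum_filter, Finset.sum_const, nsmul_eq_mul, mul_one_div]
  rw [hsum]
  apply Filter.Tendsto.congr hfun
  apply Filter.Tendsto.add
  · have : Filter.Tendsto (fun x : ℝ => (x - c) * (-(n:ℝ))) (𝓝 c) (𝓝 ((c - c)*(-(n:ℝ)))) :=
      (Filter.Tendsto.sub tendsto_id tendsto_const_nhds).mul tendsto_const_nhds
    simpa using this.mono_left nhdsWithin_le_nhds
  · apply tendsto_finset_sum
    intro k _
    by_cases hk : d k = a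
    · rw [if_pos hk]
      apply Filter.Tendsto.congr' _ tendsto_const_nhds
      filter_upwards [self_mem_nhdsWithin] with x hx
      have hxc : x - c ≠ 0 := sub_ne_zero.2 (ne_of_gt hx)
      rw [hk]
      have hden : (a:ℝ)*x - ((a:ℝ)-1) = (a:ℝ)*(x - c) := by
        rw [hc]; field_simp
      rw [hden]
      field_simp
    · rw [if_neg hk]
      have hne : (d k:ℝ)*c - ((d k:ℝ)-1) ≠ 0 := by
        intro h0
        apply hk
        have hD : (d k : ℝ) = a := by
          rw [hc] at h0
          have h1 : (d k:ℝ) * ((a:ℝ)-1) - ((d k:ℝ)-1)*a = 0 := by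
            field_simp at h0
            nlinarith [h0]
          nlinarith [h1]
        exact_mod_cast hD
      have t1 : Filter.Tendsto (fun x:ℝ => x - c) (𝓝 c) (𝓝 0) := by
        have hcont : Continuous (fun x:ℝ => x - c) := continuous_id.sub continuous_const
        simpa using hcont.tendsto c
      have t2 : Filter.Tendsto (fun x:ℝ => 1/((d k:ℝ)*x - ((d k:ℝ)-1))) (𝓝 c)
          (𝓝 (1/((d k:ℝ)*c - ((d k:ℝ)-1)))) :=
        tendsto_const_nhds.div ((tendsto_const_nhds.mul tendsto_id).sub tendsto_const_nhds) hne
      have t3 := t1.mul t2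
      rw [zero_mul] at t3
      exact t3.mono_left nhdsWithin_le_nhds

theorem snowflake_shape_unique (n n' : ℕ) (d : Fin n → ℕ) (e : Fin n' → ℕ)
    (hd : ∀ k, 1 ≤ d k) (he : ∀ k, 1 ≤ e k)
    (h : ∀ z : ℝ, z ≠ 0 →
        (∀ k, (d k : ℝ) * z ^ 2 ≠ (d k : ℝ) - 1) →
        (∀ k, (e k : ℝ) * z ^ 2 ≠ (e k : ℝ) - 1) →
        -(n : ℝ) * z + ∑ k : Fin n, 1 / ((d k : ℝ) * z - ((d k : ℝ) - 1) / z) =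
          -(n' : ℝ) * z + ∑ k : Fin n', 1 / ((e k : ℝ) * z - ((e k : ℝ) - 1) / z)) :
    n = n' ∧ Multiset.map d Finset.univ.val = Multiset.map e Finset.univ.val := by
  have key : ∀ a : ℕ, 1 ≤ a →
      (univ.filter (fun k => d k = a)).card = (univ.filter (fun k => e k = a)).card := by
    intro a ha
    have ha0 : (a:ℝ) ≠ 0 := Nat.cast_ne_zero.2 (by omega)
    set c : ℝ := ((a:ℝ)-1)/a with hc
    have hc0 : 0 ≤ c := div_nonneg (by simp; exact_mod_cast ha) (by positivity)
    -- eventual equality of the two rational functions near c from the right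
    have hev : ∀ᶠ x in 𝓝[>] c,
        (-(n:ℝ) + ∑ k, 1/((d k:ℝ)*x - ((d k:ℝ)-1))) =
        (-(n':ℝ) + ∑ k, 1/((e k:ℝ)*x - ((e k:ℝ)-1))) := by
      have h1 : ∀ᶠ x in 𝓝[>] c, ∀ k : Fin n, (d k:ℝ)*x ≠ (d k:ℝ)-1 := by
        rw [Filter.eventually_all]
        intro k
        have hdk : (d k:ℝ) ≠ 0 := Nat.cast_ne_zero.2 (by have := hd k; omega)
        filter_upwards [snow_ne_eventually c (((d k:ℝ)-1)/(d k))] with x hx hx2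
        apply hx
        field_simp
        linarith [hx2]
      have h2 : ∀ᶠ x in 𝓝[>] c, ∀ k : Fin n', (e k:ℝ)*x ≠ (e k:ℝ)-1 := by
        rw [Filter.eventually_all]
        intro k
        have hek : (e k:ℝ) ≠ 0 := Nat.cast_ne_zero.2 (by have := he k; omega)
        filter_upwards [snow_ne_eventually c (((e k:ℝ)-1)/(e k))] with x hx hx2
        apply hx
        field_simp
        linarith [hx2]
      filter_upwards [h1, h2, self_mem_nhdsWithin] with x hx1 hx2 hx
      have hx0 : 0 < x := lt_of_le_of_lt hc0 hx
      set z := Real.sqrt x with hzdef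
      have hz : z^2 = x := Real.sq_sqrt hx0.le
      have hz0 : z ≠ 0 := by
        have := Real.sqrt_pos.2 hx0
        exact ne_of_gt this
      have H := h z hz0 (fun k => by rw [hz]; exact hx1 k) (fun k => by rw [hz]; exact hx2 k)
      have e1 : ∀ k : Fin n, 1/((d k:ℝ)*z - ((d k:ℝ)-1)/z) =
          z * (1/((d k:ℝ)*x - ((d k:ℝ)-1))) := by
        intro k
        rw [← hz]
        have hden : (d k:ℝ)*z - ((d k:ℝ)-1)/z = ((d k:ℝ)*z^2 - ((d k:ℝ)-1))/z := by
          field_simp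
        rw [hden, one_div_div, div_eq_mul_one_div]
      have e2 : ∀ k : Fin n', 1/((e k:ℝ)*z - ((e k:ℝ)-1)/z) =
          z * (1/((e k:ℝ)*x - ((e k:ℝ)-1))) := by
        intro k
        rw [← hz]
        have hden : (e k:ℝ)*z - ((e k:ℝ)-1)/z = ((e k:ℝ)*z^2 - ((e k:ℝ)-1))/z := by
          field_simp
        rw [hden, one_div_div, div_eq_mul_one_div]
      rw [Finset.sum_congr rfl (fun k _ => e1 k), Finset.sum_congr rfl (fun k _ => e2 k),
        ← Finset.mul_sum, ← Finset.mul_sum] at H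
      apply mul_left_cancel₀ hz0
      linear_combination H
    have T1 := snow_residue n d hd a ha
    have T2 := snow_residue n' e he a ha
    have T2' : Filter.Tendsto (fun x : ℝ => (x - c) *
        (-(n:ℝ) + ∑ k, 1 / ((d k : ℝ) * x - ((d k : ℝ) - 1)))) (𝓝[>] c)
        (𝓝 (((univ.filter (fun k => e k = a)).card : ℝ) / a)) := by
      apply T2.congr'
      filter_upwards [hev] with x hx
      rw [hx]
    have heq := tendsto_nhds_unique T1 T2'
    have : ((univ.filter (fun k => d k = a)).card : ℝ) =
        ((univ.filter (fun k => e k = a)).card : ℝ) := by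
      field_simp at heq
      exact_mod_cast heq
    exact_mod_cast this
  have count_eq : ∀ (m : ℕ) (f : Fin m → ℕ) (a : ℕ),
      Multiset.count a (Multiset.map f univ.val) = (univ.filter (fun k => f k = a)).card := by
    intro m f a
    rw [Multiset.count_map, Finset.card_def, Finset.filter_val]
    congr 1
    apply Multiset.filter_congr
    intro k _
    exact ⟨Eq.symm, Eq.symm⟩
  have hmul : Multiset.map d Finset.univ.val = Multiset.map e Finset.univ.val := by
    ext a
    rw [count_eq, count_eq]
    rcases Nat.eq_zero_or_pos a with rfl | ha
    · have h1 : (univ.filter (fun k => d k = 0)) = (∅ : Finset (Fin n)) := by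
        apply Finset.filter_eq_empty_iff.2
        intro k _
        have := hd k; omega
      have h2 : (univ.filter (fun k => e k = 0)) = (∅ : Finset (Fin n')) := by
        apply Finset.filter_eq_empty_iff.2
        intro k _
        have := he k; omega
      rw [h1, h2]
      simp
    · exact key a ha
  constructor
  · have := congrArg Multiset.card hmul
    simpa using this
  · exact hmul
end
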